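/- Let (X,G,Φ) be a Cantor action and {U_ℓ} an adapted neighborhood basis at x ∈ X, with group chain G_ℓ = G_{U_ℓ}, normal cores C_ℓ, and inverse limit group Ĝ_∞. Then: for every f ∈ G(Φ) and every ℓ ≥ 0 there is a unique coset gC_ℓ ∈ G/C_ℓ such that f(Φ(h)(U_ℓ)) = Φ(gh)(U_ℓ) for all h ∈ G; the resulting map Θ̂ : G(Φ) → Ĝ_∞, Θ̂(f) := (gC_ℓ)_ℓ, is a bijection which is a homeomorphism for the subspace topologies and satisfies Θ̂(f ∘ f') = Θ̂(f)·Θ̂(f') for all f, f' ∈ G(Φ) (in particular G(Φ) is closed under composition and Θ̂ is an isomorphism of topological groups), and Θ̂(Φ(g)) = (gC_ℓ)_ℓ for every g ∈ G. -/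

import Mathlib

open Set Topology Filter

section CantorActionDefs

variable {X : Type*} [MetricSpace X] {G : Type*} [Group G]

/-- `Φ : G → Homeo(X)` is a group homomorphism, i.e. an action of `G` on `X` by
homeomorphisms. -/
def IsActionHom (Φ : G → X ≃ₜ X) : Prop :=
  (∀ x : X, Φ 1 x = x) ∧ ∀ g h : G, ∀ x : X, Φ (g * h) x = Φ g (Φ h x)

/-- The action is minimal: every orbit is dense. -/
def IsMinimalAction (Φ : G → X ≃ₜ X) : Prop :=
  ∀ x : X, Dense (Set.range fun g : G => Φ g x)

/-- The family `{Φ g : g ∈ G}` is equicontinuous with respect to the metric on `X`. -/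
def IsEquicontinuousAction (Φ : G → X ≃ₜ X) : Prop :=
  ∀ ε : ℝ, 0 < ε → ∃ δ : ℝ, 0 < δ ∧
    ∀ g : G, ∀ x y : X, dist x y < δ → dist (Φ g x) (Φ g y) < ε

/-- A Cantor action: a minimal equicontinuous action by homeomorphisms. -/
def IsCantorAction (Φ : G → X ≃ₜ X) : Prop :=
  IsActionHom Φ ∧ IsMinimalAction Φ ∧ IsEquicontinuousAction Φ

/-- A clopen subset adapted to the action: nonempty, clopen, and any translate meeting it
equals it. -/
def IsAdapted (Φ : G → X ≃ₜ X) (U : Set X) : Prop :=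
  U.Nonempty ∧ IsClopen U ∧ ∀ g : G, (Φ g '' U ∩ U).Nonempty → Φ g '' U = U

/-- The Ellis (closure) group `G(Φ)`: the closure of `{Φ g : g ∈ G}` in `C(X,X)` with the
compact-open topology. -/
def actionClosure (Φ : G → X ≃ₜ X) : Set C(X, X) :=
  closure (Set.range fun g : G => (Φ g : C(X, X)))

/-- An adapted neighborhood basis at `x`: a properly descending chain of adapted clopen
sets starting at `X`, containing `x`, with intersection `{x}`. -/
def IsAdaptedBasis (Φ : G → X ≃ₜ X) (x : X) (U : ℕ → Set X) : Prop :=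
  U 0 = Set.univ ∧ (∀ ℓ : ℕ, IsAdapted Φ (U ℓ)) ∧ (∀ ℓ : ℕ, x ∈ U ℓ) ∧
    (∀ ℓ : ℕ, U (ℓ + 1) ⊂ U ℓ) ∧ (⋂ ℓ : ℕ, U ℓ) = ({x} : Set X)

/-- The stabilizer chain `K_ℓ`: elements of the Ellis group fixing `U ℓ` pointwise. -/
def stabChain (Φ : G → X ≃ₜ X) (U : ℕ → Set X) (ℓ : ℕ) : Set C(X, X) :=
  {f ∈ actionClosure Φ | ∀ z ∈ U ℓ, f z = z}

/-- The stabilizer chain is eventually constant (the action is stable along `U`). -/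
def IsStableChain (Φ : G → X ≃ₜ X) (U : ℕ → Set X) : Prop :=
  ∃ ℓ₀ : ℕ, ∀ ℓ : ℕ, ℓ₀ ≤ ℓ → stabChain Φ U ℓ = stabChain Φ U ℓ₀

/-- The action of the Ellis group is locally completely quasi-analytic. -/
def IsLCQA (Φ : G → X ≃ₜ X) : Prop :=
  ∃ ε : ℝ, 0 < ε ∧ ∀ U : Set X, IsAdapted Φ U → Metric.diam U < ε →
    ∀ V : Set X, IsAdapted Φ V → V ⊆ U →
      ∀ f₁ ∈ actionClosure Φ, ∀ f₂ ∈ actionClosure Φ,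
        (∀ z ∈ V, f₁ z = f₂ z) → ∀ z ∈ U, f₁ z = f₂ z

/-- `f` is a non-Hausdorff element of the Ellis group at `x`. -/
def IsNonHausdorffElem (Φ : G → X ≃ₜ X) (f : C(X, X)) (x : X) : Prop :=
  f ∈ actionClosure Φ ∧ f x = x ∧
    (∀ W : Set X, IsClopen W → x ∈ W → ¬ ∀ z ∈ W, f z = z) ∧
    ∃ (xs : ℕ → X) (W : ℕ → Set X), Filter.Tendsto xs Filter.atTop (nhds x) ∧
      ∀ i : ℕ, xs i ∈ W i ∧ IsClopen (W i) ∧ ⇑f '' W i = W i ∧ ∀ z ∈ W i, f z = z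

/-- The restrictions to an invariant set `U` of the maps `Φ g` with `Φ g (U) = U`,
as elements of `C(U,U)`. -/
def restrictedMaps (Φ : G → X ≃ₜ X) (U : Set X) : Set C(U, U) :=
  {u : C(U, U) | ∃ g : G, Φ g '' U = U ∧ ∀ z : U, (u z : X) = Φ g (z : X)}

/-- The stabilizer subgroup `G_U = {g : G | Φ g (U) = U}` of a set `U`. -/
def setStabilizer (Φ : G → X ≃ₜ X) (hΦ : IsActionHom Φ) (U : Set X) : Subgroup G where
  carrier := {g : G | Φ g '' U = U}
  one_mem' := by
    show ⇑(Φ 1) '' U = U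
    have h : ⇑(Φ 1) = id := funext hΦ.1
    rw [h, Set.image_id]
  mul_mem' := by
    intro a b ha hb
    show ⇑(Φ (a * b)) '' U = U
    have h : ⇑(Φ (a * b)) = ⇑(Φ a) ∘ ⇑(Φ b) := funext fun z => hΦ.2 a b z
    rw [h, Set.image_comp]
    rw [show ⇑(Φ b) '' U = U from hb, show ⇑(Φ a) '' U = U from ha]
  inv_mem' := by
    intro a ha
    show ⇑(Φ a⁻¹) '' U = U
    have hcomp : ⇑(Φ a⁻¹) ∘ ⇑(Φ a) = id := funext fun z => by
      show Φ a⁻¹ (Φ a z) = z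
      have h2 := hΦ.2 a⁻¹ a z
      rw [inv_mul_cancel] at h2
      rw [← h2]
      exact hΦ.1 z
    calc ⇑(Φ a⁻¹) '' U = ⇑(Φ a⁻¹) '' (⇑(Φ a) '' U) := by
            rw [show ⇑(Φ a) '' U = U from ha]
      _ = (⇑(Φ a⁻¹) ∘ ⇑(Φ a)) '' U := (Set.image_comp _ _ _).symm
      _ = U := by rw [hcomp, Set.image_id]

end CantorActionDefs

section ChainDefs

variable {G : Type*} [Group G]

/-- A group chain in `G`: descending subgroups starting at `G`, each of finite index in
the previous one. -/
def IsGroupChain (K : ℕ → Subgroup G) : Prop :=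
  K 0 = ⊤ ∧ ∀ ℓ : ℕ, K (ℓ + 1) ≤ K ℓ ∧ (K (ℓ + 1)).relIndex (K ℓ) ≠ 0

/-- The inverse limit `lim← G ⧸ C ℓ` of the coset spaces along a chain, as a subset of
the product. -/
def chainLimitSet (C : ℕ → Subgroup G) : Set (∀ ℓ : ℕ, G ⧸ C ℓ) :=
  {σ | ∀ ℓ : ℕ, ∃ g : G, σ ℓ = (g : G ⧸ C ℓ) ∧ σ (ℓ + 1) = (g : G ⧸ C (ℓ + 1))}

/-- The inverse limit topology on `lim← G ⧸ C ℓ`: the subspace topology from the product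
of the discrete coset spaces. -/
def chainLimitTop (C : ℕ → Subgroup G) : TopologicalSpace (chainLimitSet C) :=
  TopologicalSpace.induced Subtype.val
    (@Pi.topologicalSpace ℕ (fun ℓ => G ⧸ C ℓ) fun _ => ⊥)

/-- The basepoint `(e C_ℓ)_ℓ` of the inverse limit. -/
def chainBasepoint (C : ℕ → Subgroup G) : chainLimitSet C :=
  ⟨fun ℓ => ((1 : G) : G ⧸ C ℓ), fun _ => ⟨1, rfl, rfl⟩⟩

theorem smul_mem_chainLimitSet {C : ℕ → Subgroup G} (g : G) {σ : ∀ ℓ : ℕ, G ⧸ C ℓ}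
    (hσ : σ ∈ chainLimitSet C) : (fun ℓ => g • σ ℓ) ∈ chainLimitSet C := by
  intro ℓ
  obtain ⟨k, h1, h2⟩ := hσ ℓ
  refine ⟨g * k, ?_, ?_⟩
  · show g • σ ℓ = _
    rw [h1]; rfl
  · show g • σ (ℓ + 1) = _
    rw [h2]; rfl

/-- The conjugate subgroup `g H g⁻¹`. -/
def conjSubgroup (g : G) (H : Subgroup G) : Subgroup G :=
  H.map (MulAut.conj g).toMonoidHom

/-- Equivalence of group chains (interlacing). -/
def ChainsEquivalent (Gc Hc : ℕ → Subgroup G) : Prop :=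
  ∃ K : ℕ → Subgroup G, IsGroupChain K ∧
    ∃ ls js : ℕ → ℕ, StrictMono ls ∧ StrictMono js ∧
      ∀ k : ℕ, K (2 * k) = Gc (ls k) ∧ K (2 * k + 1) = Hc (js k)

/-- Conjugate equivalence of group chains. -/
def ChainsConjugateEquivalent (Gc Hc : ℕ → Subgroup G) : Prop :=
  ∃ gs : ℕ → G, (∀ ℓ : ℕ, (gs ℓ)⁻¹ * gs (ℓ + 1) ∈ Gc ℓ) ∧
    ChainsEquivalent (fun ℓ => conjSubgroup (gs ℓ) (Gc ℓ)) Hc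

end ChainDefs

section TwoSpaces

variable {X : Type*} [MetricSpace X] {X' : Type*} [MetricSpace X']
variable {G : Type*} [Group G] {G' : Type*} [Group G']

/-- A continuous orbit equivalence between two actions, implemented by a homeomorphism
`h : X → X'` with locally constant orbit transfer functions. -/
def IsContinuousOrbitEquivalence (Φ : G → X ≃ₜ X) (Ψ : G' → X' ≃ₜ X') (h : X ≃ₜ X') :
    Prop :=
  (∀ (x : X) (g : G), ∃ (k : G') (O : Set X), IsOpen O ∧ x ∈ O ∧
      ∀ z ∈ O, Ψ k (h z) = h (Φ g z)) ∧
    ∀ (y : X') (k : G'), ∃ (g : G) (O : Set X'), IsOpen O ∧ y ∈ O ∧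
      ∀ w ∈ O, Φ g (h.symm w) = h.symm (Ψ k w)

end TwoSpaces

/-!
The translates of an adapted clopen set `U_ℓ` partition `X` with a positive Lebesgue number, so
any `f` uniformly close to some `Φ g` permutes them exactly as `g` does; the `g` that do so form a
coset of the normal core `C_ℓ`, which is the `ℓ`-th coordinate of `Θ̂ f`. Equicontinuity makes the
translates of `U_ℓ` uniformly small for large `ℓ`, so agreement of the `ℓ`-th coordinates forces
uniform closeness: `Θ̂` is a uniform embedding, and a compatible sequence of cosets `g_ℓ C_ℓ`
gives a Cauchy sequence `Φ g_ℓ` whose limit realises it.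
-/

section Translates

variable {X : Type*} [MetricSpace X] {G : Type*} [Group G] {Φ : G → X ≃ₜ X}

namespace IsActionHom

theorem image_image (hΦ : IsActionHom Φ) (g h : G) (s : Set X) :
    Φ g '' (Φ h '' s) = Φ (g * h) '' s := by
  rw [← Set.image_comp]
  exact Set.image_congr' fun z => (hΦ.2 g h z).symm

theorem image_one (hΦ : IsActionHom Φ) (s : Set X) : Φ 1 '' s = s := by
  rw [show ⇑(Φ 1) = id from funext hΦ.1, Set.image_id]

theorem apply_inv_apply (hΦ : IsActionHom Φ) (g : G) (z : X) : Φ g (Φ g⁻¹ z) = z := by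
  rw [← hΦ.2, mul_inv_cancel, hΦ.1]

theorem coe_mul (hΦ : IsActionHom Φ) (g h : G) :
    (Φ (g * h) : C(X, X)) = (Φ g : C(X, X)).comp (Φ h : C(X, X)) :=
  ContinuousMap.ext (hΦ.2 g h)

theorem image_eq_image_iff (hΦ : IsActionHom Φ) {a b : G} {s : Set X} :
    Φ a '' s = Φ b '' s ↔ Φ (b⁻¹ * a) '' s = s := by
  constructor
  · intro h
    rw [← hΦ.image_image, h, hΦ.image_image, inv_mul_cancel, hΦ.image_one]
  · intro h
    rw [← mul_inv_cancel_left b a, ← hΦ.image_image, h]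

end IsActionHom

namespace IsAdapted

variable {V W : Set X}

theorem image_eq_of_nonempty_inter (hΦ : IsActionHom Φ) (hV : IsAdapted Φ V) {g h : G}
    (hne : (Φ g '' V ∩ Φ h '' V).Nonempty) : Φ g '' V = Φ h '' V := by
  have hne' : (Φ (h⁻¹ * g) '' V ∩ V).Nonempty := by
    have := hne.image (Φ h⁻¹)
    rwa [Set.image_inter (Φ h⁻¹).injective, hΦ.image_image, hΦ.image_image, inv_mul_cancel,
      hΦ.image_one] at this
  exact hΦ.image_eq_image_iff.2 (hV.2.2 _ hne')

theorem exists_mem_image (hΦ : IsActionHom Φ) (hmin : IsMinimalAction Φ) (hV : IsAdapted Φ V)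
    (z : X) : ∃ g : G, z ∈ Φ g '' V := by
  obtain ⟨y, ⟨g, rfl⟩, hy⟩ := (hmin z).exists_mem_open hV.2.1.2 hV.1
  exact ⟨g⁻¹, Φ g z, hy, by rw [← hΦ.2, inv_mul_cancel, hΦ.1]⟩

theorem exists_pos_mem_image_of_dist_lt [CompactSpace X] (hΦ : IsActionHom Φ)
    (hmin : IsMinimalAction Φ) (hV : IsAdapted Φ V) :
    ∃ δ > 0, ∀ (g : G) (z w : X), w ∈ Φ g '' V → dist z w < δ → z ∈ Φ g '' V := by
  obtain ⟨δ, hδ, hball⟩ := lebesgue_number_lemma_of_metric isCompact_univ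
    (fun g => (Φ g).isOpen_image.2 hV.2.1.2)
    (fun z _ => Set.mem_iUnion.2 (hV.exists_mem_image hΦ hmin z))
  refine ⟨δ, hδ, fun g z w hw hzw => ?_⟩
  obtain ⟨i, hi⟩ := hball w (Set.mem_univ w)
  rw [← hV.image_eq_of_nonempty_inter hΦ ⟨w, hi (Metric.mem_ball_self hδ), hw⟩]
  exact hi hzw

theorem setStabilizer_le (hΦ : IsActionHom Φ) (hW : IsAdapted Φ W) (hV : V.Nonempty)
    (hVW : V ⊆ W) : setStabilizer Φ hΦ V ≤ setStabilizer Φ hΦ W := by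
  intro g (hg : Φ g '' V = V)
  obtain ⟨z, hz⟩ := hV
  refine hW.2.2 g ⟨z, ?_, hVW hz⟩
  rw [← hg] at hz
  exact Set.image_mono hVW hz

end IsAdapted

theorem surjective_of_mem_actionClosure [CompactSpace X] (hΦ : IsActionHom Φ) {f : C(X, X)}
    (hf : f ∈ actionClosure Φ) : Function.Surjective f := by
  refine Set.range_eq_univ.1 (Set.eq_univ_of_forall fun y => ?_)
  rw [← (isCompact_range f.continuous).isClosed.closure_eq, Metric.mem_closure_iff]
  intro ε hε
  obtain ⟨_, ⟨g, rfl⟩, hdist⟩ := Metric.mem_closure_iff.1 hf ε hε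
  refine ⟨f (Φ g⁻¹ y), Set.mem_range_self _, ?_⟩
  calc dist y (f (Φ g⁻¹ y)) = dist ((Φ g : C(X, X)) (Φ g⁻¹ y)) (f (Φ g⁻¹ y)) := by
        rw [ContinuousMap.coe_coe, hΦ.apply_inv_apply]
    _ ≤ dist (Φ g : C(X, X)) f := ContinuousMap.dist_apply_le_dist _
    _ < ε := by rwa [dist_comm]

theorem comp_mem_actionClosure [CompactSpace X] (hΦ : IsActionHom Φ) {f f' : C(X, X)}
    (hf : f ∈ actionClosure Φ) (hf' : f' ∈ actionClosure Φ) : f.comp f' ∈ actionClosure Φ := by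
  refine map_mem_closure₂ (ContinuousMap.continuous_comp'.comp continuous_swap) hf hf' ?_
  rintro _ ⟨g, rfl⟩ _ ⟨g', rfl⟩
  exact ⟨g * g', hΦ.coe_mul g g'⟩

end Translates

section ImplementingCoset

variable {X : Type*} [MetricSpace X] {G : Type*} [Group G] {Φ : G → X ≃ₜ X} {V W : Set X}

def ActsOnTranslatesAs (Φ : G → X ≃ₜ X) (V : Set X) (f : C(X, X)) (g : G) : Prop :=
  ∀ h : G, ⇑f '' (Φ h '' V) = Φ (g * h) '' V

theorem actsOnTranslatesAs_self (hΦ : IsActionHom Φ) (g : G) :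
    ActsOnTranslatesAs Φ V (Φ g : C(X, X)) g :=
  fun h => hΦ.image_image g h V

namespace ActsOnTranslatesAs

variable {f f' : C(X, X)} {g g' : G}

theorem iff_mk_eq (hΦ : IsActionHom Φ) (hw : ActsOnTranslatesAs Φ V f g) :
    ActsOnTranslatesAs Φ V f g' ↔
      (g' : G ⧸ (setStabilizer Φ hΦ V).normalCore) = (g : G ⧸ _) := by
  rw [QuotientGroup.eq]
  constructor
  · intro hw' b
    have := hΦ.image_eq_image_iff.1 ((hw b⁻¹).symm.trans (hw' b⁻¹))
    rwa [show (g' * b⁻¹)⁻¹ * (g * b⁻¹) = b * (g'⁻¹ * g) * b⁻¹ by group] at this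
  · intro hcore h
    rw [hw h, hΦ.image_eq_image_iff]
    have : Φ (h⁻¹ * (g'⁻¹ * g) * h⁻¹⁻¹) '' V = V := hcore h⁻¹
    rwa [show h⁻¹ * (g'⁻¹ * g) * h⁻¹⁻¹ = (g' * h)⁻¹ * (g * h) by group] at this

theorem comp (hw : ActsOnTranslatesAs Φ V f g) (hw' : ActsOnTranslatesAs Φ V f' g') :
    ActsOnTranslatesAs Φ V (f.comp f') (g * g') := by
  intro h
  rw [ContinuousMap.coe_comp, Set.image_comp, hw' h, hw, mul_assoc]

/-- Since `f` is onto and the translates of `V` cover `X`, mapping each translate into the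
prescribed one already forces equality. -/
theorem of_forall_image_subset [CompactSpace X] (hΦ : IsActionHom Φ) (hmin : IsMinimalAction Φ)
    (hV : IsAdapted Φ V) (hf : f ∈ actionClosure Φ)
    (hsub : ∀ h : G, ⇑f '' (Φ h '' V) ⊆ Φ (g * h) '' V) : ActsOnTranslatesAs Φ V f g := by
  refine fun h => (hsub h).antisymm fun y hy => ?_
  obtain ⟨z, rfl⟩ := surjective_of_mem_actionClosure hΦ hf y
  obtain ⟨h', hz⟩ := hV.exists_mem_image hΦ hmin z
  have hfz : f z ∈ Φ (g * h') '' V := hsub h' (Set.mem_image_of_mem _ hz)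
  have heq : Φ (g * h') '' V = Φ (g * h) '' V := hV.image_eq_of_nonempty_inter hΦ ⟨f z, hfz, hy⟩
  rw [hΦ.image_eq_image_iff, mul_inv_rev, mul_assoc, inv_mul_cancel_left,
    ← hΦ.image_eq_image_iff] at heq
  exact Set.mem_image_of_mem _ (heq ▸ hz)

theorem exists_pos_of_dist_lt [CompactSpace X] (hΦ : IsActionHom Φ) (hmin : IsMinimalAction Φ)
    (hV : IsAdapted Φ V) :
    ∃ δ > 0, ∀ f ∈ actionClosure Φ, ∀ f' ∈ actionClosure Φ, ∀ g : G,
      ActsOnTranslatesAs Φ V f g → dist f f' < δ → ActsOnTranslatesAs Φ V f' g := by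
  obtain ⟨δ, hδ, hgap⟩ := hV.exists_pos_mem_image_of_dist_lt hΦ hmin
  refine ⟨δ, hδ, fun f _ f' hf' g hw hdist => of_forall_image_subset hΦ hmin hV hf' ?_⟩
  rintro h _ ⟨z, hz, rfl⟩
  refine hgap (g * h) (f' z) (f z) ?_ ?_
  · exact hw h ▸ Set.mem_image_of_mem _ hz
  · rw [dist_comm]
    exact (ContinuousMap.dist_apply_le_dist z).trans_lt hdist

theorem exists_of_mem_actionClosure [CompactSpace X] (hΦ : IsActionHom Φ)
    (hmin : IsMinimalAction Φ) (hV : IsAdapted Φ V) (hf : f ∈ actionClosure Φ) :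
    ∃ g : G, ActsOnTranslatesAs Φ V f g := by
  obtain ⟨δ, hδ, hnear⟩ := exists_pos_of_dist_lt hΦ hmin hV
  obtain ⟨_, ⟨g, rfl⟩, hdist⟩ := Metric.mem_closure_iff.1 hf δ hδ
  exact ⟨g, hnear _ (subset_closure ⟨g, rfl⟩) f hf g (actsOnTranslatesAs_self hΦ g)
    (by rwa [dist_comm])⟩

theorem mono [CompactSpace X] (hΦ : IsActionHom Φ) (hmin : IsMinimalAction Φ)
    (hV : IsAdapted Φ V) (hW : IsAdapted Φ W) (hVW : V ⊆ W) (hf : f ∈ actionClosure Φ)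
    (hw : ActsOnTranslatesAs Φ V f g) : ActsOnTranslatesAs Φ W f g := by
  refine of_forall_image_subset hΦ hmin hW hf ?_
  rintro h _ ⟨z, hz, rfl⟩
  obtain ⟨h', hz'⟩ := hV.exists_mem_image hΦ hmin z
  have heq : Φ h' '' W = Φ h '' W :=
    hW.image_eq_of_nonempty_inter hΦ ⟨z, Set.image_mono hVW hz', hz⟩
  have hfz : f z ∈ Φ (g * h') '' W := Set.image_mono hVW (hw h' ▸ Set.mem_image_of_mem _ hz')
  rwa [← hΦ.image_image, heq, hΦ.image_image] at hfz

end ActsOnTranslatesAs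

noncomputable def implementingCoset (Φ : G → X ≃ₜ X) (hΦ : IsActionHom Φ) (V : Set X)
    (f : C(X, X)) : G ⧸ (setStabilizer Φ hΦ V).normalCore :=
  (Classical.epsilon (ActsOnTranslatesAs Φ V f) : G)

variable [CompactSpace X] (hΦ : IsActionHom Φ) {f f' : C(X, X)}

theorem mk_eq_implementingCoset_iff (hmin : IsMinimalAction Φ) (hV : IsAdapted Φ V)
    (hf : f ∈ actionClosure Φ) (g : G) :
    (g : G ⧸ (setStabilizer Φ hΦ V).normalCore) = implementingCoset Φ hΦ V f ↔
      ActsOnTranslatesAs Φ V f g := by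
  rw [implementingCoset, (Classical.epsilon_spec
    (ActsOnTranslatesAs.exists_of_mem_actionClosure hΦ hmin hV hf)).iff_mk_eq hΦ]

theorem implementingCoset_eq (hmin : IsMinimalAction Φ) (hV : IsAdapted Φ V)
    (hf : f ∈ actionClosure Φ) {g : G} (hw : ActsOnTranslatesAs Φ V f g) :
    implementingCoset Φ hΦ V f = g :=
  ((mk_eq_implementingCoset_iff hΦ hmin hV hf g).2 hw).symm

theorem implementingCoset_coe (hmin : IsMinimalAction Φ) (hV : IsAdapted Φ V) (g : G) :
    implementingCoset Φ hΦ V (Φ g : C(X, X)) = g :=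
  implementingCoset_eq hΦ hmin hV (subset_closure ⟨g, rfl⟩) (actsOnTranslatesAs_self hΦ g)

theorem implementingCoset_comp (hmin : IsMinimalAction Φ) (hV : IsAdapted Φ V)
    (hf : f ∈ actionClosure Φ) (hf' : f' ∈ actionClosure Φ) :
    implementingCoset Φ hΦ V (f.comp f') =
      implementingCoset Φ hΦ V f * implementingCoset Φ hΦ V f' := by
  obtain ⟨g, hg⟩ := ActsOnTranslatesAs.exists_of_mem_actionClosure hΦ hmin hV hf
  obtain ⟨g', hg'⟩ := ActsOnTranslatesAs.exists_of_mem_actionClosure hΦ hmin hV hf'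
  rw [implementingCoset_eq hΦ hmin hV hf hg, implementingCoset_eq hΦ hmin hV hf' hg',
    implementingCoset_eq hΦ hmin hV (comp_mem_actionClosure hΦ hf hf') (hg.comp hg'),
    QuotientGroup.mk_mul]

theorem exists_pos_implementingCoset_eq_of_dist_lt (hmin : IsMinimalAction Φ)
    (hV : IsAdapted Φ V) :
    ∃ δ > 0, ∀ f ∈ actionClosure Φ, ∀ f' ∈ actionClosure Φ,
      dist f f' < δ → implementingCoset Φ hΦ V f = implementingCoset Φ hΦ V f' := by
  obtain ⟨δ, hδ, hnear⟩ := ActsOnTranslatesAs.exists_pos_of_dist_lt hΦ hmin hV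
  refine ⟨δ, hδ, fun f hf f' hf' hdist => ?_⟩
  obtain ⟨g, hg⟩ := ActsOnTranslatesAs.exists_of_mem_actionClosure hΦ hmin hV hf
  rw [implementingCoset_eq hΦ hmin hV hf hg,
    implementingCoset_eq hΦ hmin hV hf' (hnear f hf f' hf' g hg hdist)]

end ImplementingCoset

theorem mk_eq_of_mem_chainLimitSet {G : Type*} [Group G] {C : ℕ → Subgroup G} (hC : Antitone C)
    {σ : ∀ ℓ : ℕ, G ⧸ C ℓ} (hσ : σ ∈ chainLimitSet C) {m n : ℕ} (hmn : m ≤ n) {g : G}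
    (hg : (g : G ⧸ C n) = σ n) : (g : G ⧸ C m) = σ m := by
  induction n, hmn using Nat.le_induction generalizing g with
  | base => exact hg
  | succ n hmn ih =>
    obtain ⟨k, hk, hk'⟩ := hσ n
    refine ih ?_
    rw [hk, QuotientGroup.eq]
    rw [hk', QuotientGroup.eq] at hg
    exact hC n.le_succ hg

theorem isEmbedding_pi_discrete {Y : Type*} [MetricSpace Y] {ι : Type*} {Q : ι → Type*}
    [∀ i, TopologicalSpace (Q i)] [∀ i, DiscreteTopology (Q i)] {Θ : Y → ∀ i, Q i}
    (hloc : ∀ i, ∃ δ > 0, ∀ y y' : Y, dist y y' < δ → Θ y i = Θ y' i)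
    (hsep : ∀ ε > 0, ∃ i, ∀ y y' : Y, Θ y i = Θ y' i → dist y y' < ε) :
    IsEmbedding Θ := by
  have hcont : Continuous Θ := by
    refine continuous_pi fun i => continuous_discrete_rng.2 fun q => Metric.isOpen_iff.2 ?_
    obtain ⟨δ, hδ, hδ'⟩ := hloc i
    intro y (hy : Θ y i = q)
    exact ⟨δ, hδ, fun y' hy' => (hδ' y' y hy').trans hy⟩
  refine ⟨isInducing_iff_nhds.2 fun y => le_antisymm (hcont.tendsto y).le_comap ?_, ?_⟩
  · refine Metric.nhds_basis_ball.ge_iff.2 fun ε hε => ?_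
    obtain ⟨i, hi⟩ := hsep ε hε
    exact ⟨{σ | σ i = Θ y i}, ((isOpen_discrete {Θ y i}).preimage (continuous_apply i)).mem_nhds
      rfl, fun y' hy' => hi y' y hy'⟩
  · intro y y' h
    refine eq_of_forall_dist_le fun ε hε => ?_
    obtain ⟨i, hi⟩ := hsep ε hε
    exact (hi y y' (congrFun h i)).le

namespace IsAdaptedBasis

variable {X : Type*} [MetricSpace X] {G : Type*} {Φ : G → X ≃ₜ X} {x : X} {U : ℕ → Set X}

theorem exists_forall_dist_lt [CompactSpace X] (hU : IsAdaptedBasis Φ x U)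
    (hequi : IsEquicontinuousAction Φ) {ε : ℝ} (hε : 0 < ε) :
    ∃ m, ∀ g : G, ∀ a ∈ U m, ∀ b ∈ U m, dist (Φ g a) (Φ g b) < ε := by
  obtain ⟨δ, hδ, hequi⟩ := hequi ε hε
  have hanti : Antitone U := antitone_nat_of_succ_le fun ℓ => (hU.2.2.2.1 ℓ).subset
  obtain ⟨m, hm⟩ := exists_subset_nhds_of_isCompact' hanti.directed_ge
    (fun ℓ => (hU.2.1 ℓ).2.1.1.isCompact) (fun ℓ => (hU.2.1 ℓ).2.1.1)
    (U := Metric.ball x (δ / 2)) (by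
      rw [hU.2.2.2.2]
      rintro _ rfl
      exact Metric.ball_mem_nhds _ (half_pos hδ))
  refine ⟨m, fun g a ha b hb => hequi g a b ?_⟩
  calc dist a b ≤ dist a x + dist b x := dist_triangle_right a b x
    _ < δ / 2 + δ / 2 := add_lt_add (hm ha) (hm hb)
    _ = δ := add_halves δ

variable [Group G]

theorem normalCore_antitone (hU : IsAdaptedBasis Φ x U) (hΦ : IsActionHom Φ) :
    Antitone fun ℓ => (setStabilizer Φ hΦ (U ℓ)).normalCore :=
  antitone_nat_of_succ_le fun ℓ => Subgroup.normalCore_mono <|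
    (hU.2.1 ℓ).setStabilizer_le hΦ (hU.2.1 (ℓ + 1)).1 (hU.2.2.2.1 ℓ).subset

variable [CompactSpace X]

theorem exists_dist_lt_of_implementingCoset_eq (hU : IsAdaptedBasis Φ x U) (hΦ : IsActionHom Φ)
    (hmin : IsMinimalAction Φ) (hequi : IsEquicontinuousAction Φ) {ε : ℝ} (hε : 0 < ε) :
    ∃ m, ∀ f ∈ actionClosure Φ, ∀ f' ∈ actionClosure Φ,
      implementingCoset Φ hΦ (U m) f = implementingCoset Φ hΦ (U m) f' → dist f f' < ε := by
  obtain ⟨m, hm⟩ := hU.exists_forall_dist_lt hequi hε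
  refine ⟨m, fun f hf f' hf' heq => (ContinuousMap.dist_lt_iff hε).2 fun z => ?_⟩
  obtain ⟨g, hg⟩ := ActsOnTranslatesAs.exists_of_mem_actionClosure hΦ hmin (hU.2.1 m) hf
  have hg' : ActsOnTranslatesAs Φ (U m) f' g := by
    rw [← mk_eq_implementingCoset_iff hΦ hmin (hU.2.1 m) hf', ← heq,
      implementingCoset_eq hΦ hmin (hU.2.1 m) hf hg]
  obtain ⟨h, a, ha, rfl⟩ := (hU.2.1 m).exists_mem_image hΦ hmin z
  obtain ⟨b, hb, hfb⟩ := hg h ▸ Set.mem_image_of_mem f (Set.mem_image_of_mem _ ha)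
  obtain ⟨b', hb', hfb'⟩ := hg' h ▸ Set.mem_image_of_mem f' (Set.mem_image_of_mem _ ha)
  rw [← hfb, ← hfb']
  exact hm _ b hb b' hb'

theorem implementingCoset_mem_chainLimitSet (hU : IsAdaptedBasis Φ x U) (hΦ : IsActionHom Φ)
    (hmin : IsMinimalAction Φ) {f : C(X, X)} (hf : f ∈ actionClosure Φ) :
    (fun ℓ => implementingCoset Φ hΦ (U ℓ) f) ∈
      chainLimitSet fun ℓ => (setStabilizer Φ hΦ (U ℓ)).normalCore := by
  intro ℓ
  obtain ⟨g, hg⟩ := ActsOnTranslatesAs.exists_of_mem_actionClosure hΦ hmin (hU.2.1 (ℓ + 1)) hf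
  refine ⟨g, implementingCoset_eq hΦ hmin (hU.2.1 ℓ) hf ?_,
    implementingCoset_eq hΦ hmin (hU.2.1 (ℓ + 1)) hf hg⟩
  exact hg.mono hΦ hmin (hU.2.1 (ℓ + 1)) (hU.2.1 ℓ) (hU.2.2.2.1 ℓ).subset hf

theorem exists_implementingCoset_eq (hU : IsAdaptedBasis Φ x U) (hΦ : IsActionHom Φ)
    (hmin : IsMinimalAction Φ) (hequi : IsEquicontinuousAction Φ)
    {σ : ∀ ℓ : ℕ, G ⧸ (setStabilizer Φ hΦ (U ℓ)).normalCore}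
    (hσ : σ ∈ chainLimitSet fun ℓ => (setStabilizer Φ hΦ (U ℓ)).normalCore) :
    ∃ f ∈ actionClosure Φ, (fun ℓ => implementingCoset Φ hΦ (U ℓ) f) = σ := by
  choose k hk using fun ℓ => QuotientGroup.mk_surjective (σ ℓ)
  have hmem : ∀ n, (Φ (k n) : C(X, X)) ∈ actionClosure Φ := fun n => subset_closure ⟨k n, rfl⟩
  have hcoset : ∀ m n, m ≤ n → implementingCoset Φ hΦ (U m) (Φ (k n) : C(X, X)) = σ m :=
    fun m n hmn => by
      rw [implementingCoset_coe hΦ hmin (hU.2.1 m)]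
      exact mk_eq_of_mem_chainLimitSet (hU.normalCore_antitone hΦ) hσ hmn (hk n)
  have hcauchy : CauchySeq fun n => (Φ (k n) : C(X, X)) := by
    refine Metric.cauchySeq_iff'.2 fun ε hε => ?_
    obtain ⟨m, hm⟩ := hU.exists_dist_lt_of_implementingCoset_eq hΦ hmin hequi hε
    exact ⟨m, fun n hn => hm _ (hmem n) _ (hmem m) ((hcoset m n hn).trans (hcoset m m le_rfl).symm)⟩
  obtain ⟨f, hlim⟩ := cauchySeq_tendsto_of_complete hcauchy
  have hf : f ∈ actionClosure Φ :=
    mem_closure_of_tendsto hlim (Eventually.of_forall fun n => ⟨k n, rfl⟩)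
  refine ⟨f, hf, funext fun m => ?_⟩
  obtain ⟨δ, hδ, hloc⟩ := exists_pos_implementingCoset_eq_of_dist_lt hΦ hmin (hU.2.1 m)
  obtain ⟨n, hn, hmn⟩ :=
    ((Metric.tendsto_nhds.1 hlim δ hδ).and (eventually_ge_atTop m)).exists
  rw [hloc f hf _ (hmem n) (by rwa [dist_comm]), hcoset m n hmn]

end IsAdaptedBasis

theorem stmt6_general {X : Type*} [MetricSpace X] [CompactSpace X]
    {G : Type*} [Group G] (Φ : G → X ≃ₜ X) (hΦ : IsCantorAction Φ)
    (x : X) (U : ℕ → Set X) (hU : IsAdaptedBasis Φ x U) :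
    (∀ f ∈ actionClosure Φ, ∀ ℓ : ℕ, ∃ g : G,
        (∀ h : G, ⇑f '' (Φ h '' U ℓ) = Φ (g * h) '' U ℓ) ∧
        ∀ g' : G, ((∀ h : G, ⇑f '' (Φ h '' U ℓ) = Φ (g' * h) '' U ℓ) ↔
          ((g' : G ⧸ (setStabilizer Φ hΦ.1 (U ℓ)).normalCore) =
            (g : G ⧸ (setStabilizer Φ hΦ.1 (U ℓ)).normalCore)))) ∧
    ∃ Θ : C(X, X) → ∀ ℓ : ℕ, G ⧸ (setStabilizer Φ hΦ.1 (U ℓ)).normalCore,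
      (∀ f ∈ actionClosure Φ, ∀ ℓ : ℕ, ∀ g : G,
          (((g : G ⧸ (setStabilizer Φ hΦ.1 (U ℓ)).normalCore) = Θ f ℓ) ↔
            ∀ h : G, ⇑f '' (Φ h '' U ℓ) = Φ (g * h) '' U ℓ)) ∧
      Set.InjOn Θ (actionClosure Φ) ∧
      Θ '' actionClosure Φ =
        chainLimitSet (fun ℓ => (setStabilizer Φ hΦ.1 (U ℓ)).normalCore) ∧
      (∀ f ∈ actionClosure Φ, ∀ f' ∈ actionClosure Φ,
          f.comp f' ∈ actionClosure Φ ∧ ∀ ℓ : ℕ, Θ (f.comp f') ℓ = Θ f ℓ * Θ f' ℓ) ∧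
      @Topology.IsEmbedding {f : C(X, X) // f ∈ actionClosure Φ}
        (∀ ℓ : ℕ, G ⧸ (setStabilizer Φ hΦ.1 (U ℓ)).normalCore) _
        (@Pi.topologicalSpace ℕ _ fun _ => ⊥) (fun f => Θ f.val) ∧
      ∀ g : G, Θ (Φ g : C(X, X)) =
        fun ℓ => (g : G ⧸ (setStabilizer Φ hΦ.1 (U ℓ)).normalCore) := by
  obtain ⟨hact, hmin, hequi⟩ := hΦ
  have hV := hU.2.1
  let Θ : C(X, X) → ∀ ℓ : ℕ, G ⧸ (setStabilizer Φ hact (U ℓ)).normalCore :=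
    fun f ℓ => implementingCoset Φ hact (U ℓ) f
  let _ : ∀ ℓ, TopologicalSpace (G ⧸ (setStabilizer Φ hact (U ℓ)).normalCore) := fun _ => ⊥
  have _ : ∀ ℓ, DiscreteTopology (G ⧸ (setStabilizer Φ hact (U ℓ)).normalCore) := fun _ => ⟨rfl⟩
  have hemb : IsEmbedding fun f : {f : C(X, X) // f ∈ actionClosure Φ} => Θ f.1 := by
    refine isEmbedding_pi_discrete (fun ℓ => ?_) (fun ε hε => ?_)
    · obtain ⟨δ, hδ, h⟩ := exists_pos_implementingCoset_eq_of_dist_lt hact hmin (hV ℓ)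
      exact ⟨δ, hδ, fun f f' => h f f.2 f' f'.2⟩
    · obtain ⟨m, hm⟩ := hU.exists_dist_lt_of_implementingCoset_eq hact hmin hequi hε
      exact ⟨m, fun f f' => hm f f.2 f' f'.2⟩
  refine ⟨fun f hf ℓ => ?_, Θ, fun f hf ℓ g => mk_eq_implementingCoset_iff hact hmin (hV ℓ) hf g,
    Set.injOn_iff_injective.2 hemb.injective, ?_,
    fun f hf f' hf' => ⟨comp_mem_actionClosure hact hf hf',
      fun ℓ => implementingCoset_comp hact hmin (hV ℓ) hf hf'⟩,
    hemb, fun g => funext fun ℓ => implementingCoset_coe hact hmin (hV ℓ) g⟩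
  · obtain ⟨g, hg⟩ := ActsOnTranslatesAs.exists_of_mem_actionClosure hact hmin (hV ℓ) hf
    exact ⟨g, hg, fun g' => hg.iff_mk_eq hact⟩
  · refine Set.Subset.antisymm ?_ fun σ hσ => hU.exists_implementingCoset_eq hact hmin hequi hσ
    rintro _ ⟨f, hf, rfl⟩
    exact hU.implementingCoset_mem_chainLimitSet hact hmin hf

/-- The Ellis group `G(Φ)` is isomorphic, as a topological group, to the
inverse limit `Ĝ_∞` of the finite quotients `G ⧸ C_ℓ` by the cores of the group chain. -/
theorem stmt6 {X : Type*} [MetricSpace X] [CompactSpace X] [TotallyDisconnectedSpace X]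
    [Nonempty X] (hX : Perfect (Set.univ : Set X))
    {G : Type*} [Group G] [Countable G] (Φ : G → X ≃ₜ X) (hΦ : IsCantorAction Φ)
    (x : X) (U : ℕ → Set X) (hU : IsAdaptedBasis Φ x U) :
    (∀ f ∈ actionClosure Φ, ∀ ℓ : ℕ, ∃ g : G,
        (∀ h : G, ⇑f '' (Φ h '' U ℓ) = Φ (g * h) '' U ℓ) ∧
        ∀ g' : G, ((∀ h : G, ⇑f '' (Φ h '' U ℓ) = Φ (g' * h) '' U ℓ) ↔
          ((g' : G ⧸ (setStabilizer Φ hΦ.1 (U ℓ)).normalCore) =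
            (g : G ⧸ (setStabilizer Φ hΦ.1 (U ℓ)).normalCore)))) ∧
    ∃ Θ : C(X, X) → ∀ ℓ : ℕ, G ⧸ (setStabilizer Φ hΦ.1 (U ℓ)).normalCore,
      (∀ f ∈ actionClosure Φ, ∀ ℓ : ℕ, ∀ g : G,
          (((g : G ⧸ (setStabilizer Φ hΦ.1 (U ℓ)).normalCore) = Θ f ℓ) ↔
            ∀ h : G, ⇑f '' (Φ h '' U ℓ) = Φ (g * h) '' U ℓ)) ∧
      Set.InjOn Θ (actionClosure Φ) ∧
      Θ '' actionClosure Φ =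
        chainLimitSet (fun ℓ => (setStabilizer Φ hΦ.1 (U ℓ)).normalCore) ∧
      (∀ f ∈ actionClosure Φ, ∀ f' ∈ actionClosure Φ,
          f.comp f' ∈ actionClosure Φ ∧ ∀ ℓ : ℕ, Θ (f.comp f') ℓ = Θ f ℓ * Θ f' ℓ) ∧
      @Topology.IsEmbedding {f : C(X, X) // f ∈ actionClosure Φ}
        (∀ ℓ : ℕ, G ⧸ (setStabilizer Φ hΦ.1 (U ℓ)).normalCore) _
        (@Pi.topologicalSpace ℕ _ fun _ => ⊥) (fun f => Θ f.val) ∧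
      ∀ g : G, Θ (Φ g : C(X, X)) =
        fun ℓ => (g : G ⧸ (setStabilizer Φ hΦ.1 (U ℓ)).normalCore) :=
  stmt6_general Φ hΦ x U hU
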